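/- Let P be the Petersen graph and M a perfect matching of P. In the multigraph P' obtained from P by duplicating the edges of M (adding one parallel copy of each edge of M), if N_1 and N_2 are two edge-disjoint perfect matchings of P', then at least one of N_1, N_2 projects to the matching M in P. -/

import Mathlib

/-- The vertex type of the Petersen graph, realized as the Kneser graph K(5,2). -/
abbrev PetersenV : Type := {s : Finset (Fin 5) // s.card = 2}

/-- The Petersen graph as the Kneser graph K(5,2). -/
def petersen : SimpleGraph PetersenV where
  Adj a b := Disjoint a.1 b.1
  symm := ⟨fun _ _ h => h.symm⟩
  loopless := by
    refine ⟨?_⟩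
    intro a h
    have h0 : a.1 = ⊥ := disjoint_self.mp h
    have h2 := a.2
    rw [h0] at h2
    simp at h2

instance : DecidableRel petersen.Adj :=
  fun a b => inferInstanceAs (Decidable (Disjoint a.1 b.1))

/-- Perfect matching of the (simple) Petersen graph, as a finite edge set. -/
def IsPM (m : Finset (Sym2 PetersenV)) : Prop :=
  (↑m ⊆ petersen.edgeSet) ∧ ∀ v : PetersenV, ∃! e, e ∈ m ∧ v ∈ e

/-- `m` is a perfect matching of the multigraph whose edge multiset is `E`:
a sub-multiset of `E` in which every vertex lies in exactly one edge
(counted with multiplicity). -/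
def IsPMOf (E m : Multiset (Sym2 PetersenV)) : Prop :=
  m ≤ E ∧ ∀ v : PetersenV, (m.filter (fun e => v ∈ e)).card = 1

/-!
A perfect matching of `P + M` projects to a perfect matching of `P`, and an edge used by both `N₁`
and `N₂` has multiplicity two in `P + M`, so it lies in `M`. The Petersen graph has exactly six
perfect matchings; any two of them share an edge, and every edge lies in exactly two of them. If
the projections `A` and `B` of `N₁` and `N₂` coincide, then `A ⊆ M` forces `A = M`; otherwise an
edge common to `A` and `B` lies in the three perfect matchings `A`, `B`, `M`, so `M ∈ {A, B}`.
-/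

open Finset

section PerfectMatchings

variable {V : Type*}

theorem card_filter_mem_eq_one_iff [DecidableEq V] {m : Finset (Sym2 V)} {v : V} :
    #{e ∈ m | v ∈ e} = 1 ↔ ∃! e, e ∈ m ∧ v ∈ e := by
  simp only [card_eq_one_iff_existsUnique, mem_filter]

theorem card_mul_two_eq_card_of_card_filter_mem_eq_one [Fintype V] [DecidableEq V]
    {m : Finset (Sym2 V)} (hm : ∀ e ∈ m, ¬e.IsDiag) (h : ∀ v, #{e ∈ m | v ∈ e} = 1) :
    #m * 2 = Fintype.card V :=
  calc #m * 2 = ∑ e ∈ m, #{v ∈ univ | v ∈ e} := by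
        rw [card_eq_sum_ones, sum_mul, one_mul]
        refine sum_congr rfl fun e he => ?_
        rw [← Sym2.card_toFinset_of_not_isDiag e (hm e he)]
        congr 1
        ext v
        simp
    _ = ∑ v, #{e ∈ m | v ∈ e} :=
        (sum_card_bipartiteAbove_eq_sum_card_bipartiteBelow (fun v e => v ∈ e)).symm
    _ = Fintype.card V := by simp [h]

theorem eq_of_subset_of_existsUnique {A B : Finset (Sym2 V)} (hA : ∀ v, ∃ e ∈ A, v ∈ e)
    (hB : ∀ v, ∃! e, e ∈ B ∧ v ∈ e) (hAB : A ⊆ B) : A = B := by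
  refine hAB.antisymm fun e he => ?_
  induction e using Sym2.ind with
  | _ v w =>
    obtain ⟨f, hfA, hvf⟩ := hA v
    rwa [(hB v).unique ⟨he, Sym2.mem_mk_left v w⟩ ⟨hAB hfA, hvf⟩]

theorem Multiset.existsUnique_mem_toFinset_of_card_filter_mem_eq_one [DecidableEq V]
    {N : Multiset (Sym2 V)} {v : V} (h : (N.filter (v ∈ ·)).card = 1) :
    ∃! e, e ∈ N.toFinset ∧ v ∈ e := by
  obtain ⟨e, he⟩ := Multiset.card_eq_one.mp h
  have hmem : ∀ f, f ∈ N.toFinset ∧ v ∈ f ↔ f = e := fun f => by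
    simpa using congrArg (f ∈ ·) he
  exact ⟨e, (hmem e).mpr rfl, fun f hf => (hmem f).mp hf⟩

end PerfectMatchings

theorem Multiset.Nodup.mem_of_add_le_add {α : Type*} [DecidableEq α] {S T N₁ N₂ : Multiset α}
    {a : α} (hS : S.Nodup) (h : N₁ + N₂ ≤ S + T) (h₁ : a ∈ N₁) (h₂ : a ∈ N₂) : a ∈ T := by
  have hle := Multiset.le_iff_count.mp h a
  rw [Multiset.count_add, Multiset.count_add] at hle
  have hSa := Multiset.nodup_iff_count_le_one.mp hS a
  have h₁a := Multiset.one_le_count_iff_mem.mpr h₁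
  have h₂a := Multiset.one_le_count_iff_mem.mpr h₂
  exact Multiset.one_le_count_iff_mem.mp (by omega)

def PetersenV.pair (a b : Fin 5) (h : a ≠ b := by decide) : PetersenV := ⟨{a, b}, card_pair h⟩

theorem card_petersenV : Fintype.card PetersenV = 10 := by
  rw [Fintype.card_finset_len]; rfl

def petersenPerfectMatchings : Finset (Finset (Sym2 PetersenV)) :=
  {{s(.pair 0 1, .pair 2 3), s(.pair 0 2, .pair 1 4), s(.pair 0 3, .pair 2 4),
      s(.pair 0 4, .pair 1 3), s(.pair 1 2, .pair 3 4)},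
    {s(.pair 0 1, .pair 2 3), s(.pair 0 2, .pair 3 4), s(.pair 0 3, .pair 1 4),
      s(.pair 0 4, .pair 1 2), s(.pair 1 3, .pair 2 4)},
    {s(.pair 0 1, .pair 2 4), s(.pair 0 2, .pair 1 3), s(.pair 0 3, .pair 1 4),
      s(.pair 0 4, .pair 2 3), s(.pair 1 2, .pair 3 4)},
    {s(.pair 0 1, .pair 2 4), s(.pair 0 2, .pair 3 4), s(.pair 0 3, .pair 1 2),
      s(.pair 0 4, .pair 1 3), s(.pair 1 4, .pair 2 3)},
    {s(.pair 0 1, .pair 3 4), s(.pair 0 2, .pair 1 3), s(.pair 0 3, .pair 2 4),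
      s(.pair 0 4, .pair 1 2), s(.pair 1 4, .pair 2 3)},
    {s(.pair 0 1, .pair 3 4), s(.pair 0 2, .pair 1 4), s(.pair 0 3, .pair 1 2),
      s(.pair 0 4, .pair 2 3), s(.pair 1 3, .pair 2 4)}}

-- The handshake count `#m * 2 = 10` confines the search to the `choose 15 5` five-edge sets.
theorem mem_petersenPerfectMatchings_of_mem_powersetCard :
    ∀ m ∈ petersen.edgeFinset.powersetCard 5, (∀ v, #{e ∈ m | v ∈ e} = 1) →
      m ∈ petersenPerfectMatchings := by
  decide +kernel

theorem petersenPerfectMatchings_inter_nonempty :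
    ∀ A ∈ petersenPerfectMatchings, ∀ B ∈ petersenPerfectMatchings, (A ∩ B).Nonempty := by
  simp only [petersenPerfectMatchings, forall_mem_insert, mem_singleton, forall_eq]
  decide +kernel

theorem card_filter_mem_petersenPerfectMatchings :
    ∀ e ∈ petersen.edgeFinset, #{m ∈ petersenPerfectMatchings | e ∈ m} = 2 := by
  decide +kernel

namespace IsPM

variable {A B C : Finset (Sym2 PetersenV)}

theorem mem_petersenPerfectMatchings (hA : IsPM A) : A ∈ petersenPerfectMatchings := by
  have hcover : ∀ v, #{e ∈ A | v ∈ e} = 1 := fun v => card_filter_mem_eq_one_iff.mpr (hA.2 v)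
  have hcard : #A * 2 = 10 := card_petersenV ▸ card_mul_two_eq_card_of_card_filter_mem_eq_one
    (fun e he => petersen.not_isDiag_of_mem_edgeSet (hA.1 he)) hcover
  refine mem_petersenPerfectMatchings_of_mem_powersetCard A (mem_powersetCard.mpr ⟨?_, by omega⟩)
    hcover
  exact fun e he => petersen.mem_edgeFinset.mpr (hA.1 he)

theorem eq_of_subset (hA : IsPM A) (hB : IsPM B) (hAB : A ⊆ B) : A = B :=
  eq_of_subset_of_existsUnique (fun v => (hA.2 v).exists) hB.2 hAB

theorem inter_nonempty (hA : IsPM A) (hB : IsPM B) : (A ∩ B).Nonempty :=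
  petersenPerfectMatchings_inter_nonempty A hA.mem_petersenPerfectMatchings B
    hB.mem_petersenPerfectMatchings

theorem eq_or_eq_or_eq_of_mem (hA : IsPM A) (hB : IsPM B) (hC : IsPM C) {e : Sym2 PetersenV}
    (heA : e ∈ A) (heB : e ∈ B) (heC : e ∈ C) : A = B ∨ A = C ∨ B = C := by
  by_contra! hne
  obtain ⟨hAB, hAC, hBC⟩ := hne
  have hsub : ({A, B, C} : Finset _) ⊆ {m ∈ petersenPerfectMatchings | e ∈ m} := by
    simp [insert_subset_iff, hA.mem_petersenPerfectMatchings, hB.mem_petersenPerfectMatchings,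
      hC.mem_petersenPerfectMatchings, heA, heB, heC]
  have hcard := card_le_card hsub
  rw [card_filter_mem_petersenPerfectMatchings e (petersen.mem_edgeFinset.mpr (hA.1 heA)),
    card_insert_of_notMem (by simp [hAB, hAC]), card_pair hBC] at hcard
  omega

end IsPM

theorem IsPMOf.isPM_toFinset {M : Finset (Sym2 PetersenV)} {N : Multiset (Sym2 PetersenV)}
    (hM : ↑M ⊆ petersen.edgeSet) (hN : IsPMOf (petersen.edgeFinset.val + M.val) N) :
    IsPM N.toFinset := by
  refine ⟨fun e he => ?_,
    fun v => Multiset.existsUnique_mem_toFinset_of_card_filter_mem_eq_one (hN.2 v)⟩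
  rcases Multiset.mem_add.mp (Multiset.mem_of_le hN.1 (Multiset.mem_toFinset.mp he)) with h | h
  · exact petersen.mem_edgeFinset.mp h
  · exact hM h

/-- Rizzi: if `M` is a perfect matching of the Petersen graph `P` and `P'` is
the multigraph obtained from `P` by adding a parallel copy of each edge of
`M`, then for any two edge-disjoint perfect matchings `N₁, N₂` of `P'`,
at least one of them projects to `M`. -/
theorem petersen_plus_matching_disjoint_pms
    (M : Finset (Sym2 PetersenV)) (hM : IsPM M)
    (E : Multiset (Sym2 PetersenV)) (hE : E = petersen.edgeFinset.val + M.val)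
    (N₁ N₂ : Multiset (Sym2 PetersenV))
    (h₁ : IsPMOf E N₁) (h₂ : IsPMOf E N₂) (hdisj : N₁ + N₂ ≤ E) :
    N₁.toFinset = M ∨ N₂.toFinset = M := by
  subst hE
  have hA := h₁.isPM_toFinset hM.1
  have hB := h₂.isPM_toFinset hM.1
  have hcommon : ∀ e ∈ N₁.toFinset, e ∈ N₂.toFinset → e ∈ M := fun e he₁ he₂ =>
    petersen.edgeFinset.nodup.mem_of_add_le_add hdisj (Multiset.mem_toFinset.mp he₁)
      (Multiset.mem_toFinset.mp he₂)
  by_cases hAB : N₁.toFinset = N₂.toFinset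
  · exact Or.inl (hA.eq_of_subset hM fun e he => hcommon e he (hAB ▸ he))
  · obtain ⟨e, he⟩ := hA.inter_nonempty hB
    obtain ⟨he₁, he₂⟩ := mem_inter.mp he
    rcases hA.eq_or_eq_or_eq_of_mem hB hM he₁ he₂ (hcommon e he₁ he₂) with h | h | h
    · exact (hAB h).elim
    · exact Or.inl h
    · exact Or.inr h
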